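/- arXiv:2510.14458 — 4 statements merged into one kernel-verified Lean document; each statement's English description precedes it below -/
import Mathlib

section
/- Let {a_n}_{n=-∞}^{∞} be a sequence of complex numbers with finite first average ã_1 = sup over intervals w ⊂ ℤ of (1/|w|)|∑_{m∈w} a_m| < ∞. For k ≥ 0 define ã_{2^k} = sup over intervals w ⊂ ℤ with |w| ≥ 2^k of (1/|w|)|∑_{m∈w} a_m|. Then for every integer k ≥ 0, ã_{2^k} ≤ 5·ã_{2^{k+1}}. -/
open scoped ENNReal BigOperators

/-! An interval `w` of length `≥ n` followed by an adjacent interval `v` of length `N ≤ 2n`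
gives `∑_w = ∑_{w ∪ v} - ∑_v`, and both intervals on the right have length `≥ N`, so
`|∑_w| ≤ (|w| + 2N) ã_N ≤ 5 |w| ã_N`. -/

/-- The average `ã_n` of a two-sided complex sequence: the supremum over all
intervals `w ⊂ ℤ` (finite sets of consecutive integers) of cardinality `≥ n`
of `(1/|w|)·|∑_{m∈w} a_m|`, valued in `ℝ≥0∞`. -/
noncomputable def seqAvg (a : ℤ → ℂ) (n : ℕ) : ℝ≥0∞ :=
  ⨆ (l : ℤ) (m : ℕ) (_ : n ≤ m + 1),
    ENNReal.ofReal (‖∑ j ∈ Finset.Icc l (l + (m : ℤ)), a j‖ / (m + 1))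

lemma Finset.sum_Icc_int_append {M : Type*} [AddCommMonoid M] (f : ℤ → M) (l : ℤ) (m p : ℕ) :
    ∑ j ∈ Finset.Icc l (l + ((m + p + 1 : ℕ) : ℤ)), f j
      = ∑ j ∈ Finset.Icc l (l + (m : ℤ)), f j
        + ∑ j ∈ Finset.Icc (l + (m : ℤ) + 1) (l + (m : ℤ) + 1 + (p : ℤ)), f j := by
  rw [← Finset.sum_union]
  · congr 1
    ext x
    simp only [Finset.mem_union, Finset.mem_Icc]
    push_cast
    omega
  · rw [Finset.disjoint_left]
    intro x hx hx'
    simp only [Finset.mem_Icc] at hx hx'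
    omega

section seqAvg

variable {a : ℤ → ℂ} {n : ℕ}

lemma norm_sum_Icc_le_mul_seqAvg (h : seqAvg a n ≠ ⊤) (l : ℤ) {m : ℕ} (hm : n ≤ m + 1) :
    ‖∑ j ∈ Finset.Icc l (l + (m : ℤ)), a j‖ ≤ (m + 1) * (seqAvg a n).toReal := by
  have hle : ENNReal.ofReal (‖∑ j ∈ Finset.Icc l (l + (m : ℤ)), a j‖ / (m + 1)) ≤ seqAvg a n :=
    le_iSup_of_le l (le_iSup_of_le m (le_iSup_of_le hm le_rfl))
  rw [← ENNReal.ofReal_toReal h, ENNReal.ofReal_le_ofReal_iff ENNReal.toReal_nonneg,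
    div_le_iff₀ (by positivity)] at hle
  linarith

lemma seqAvg_le_ofReal {C : ℝ}
    (hC : ∀ (l : ℤ) (m : ℕ), n ≤ m + 1 → ‖∑ j ∈ Finset.Icc l (l + (m : ℤ)), a j‖ ≤ (m + 1) * C) :
    seqAvg a n ≤ ENNReal.ofReal C := by
  refine iSup_le fun l => iSup_le fun m => iSup_le fun hm => ENNReal.ofReal_le_ofReal ?_
  rw [div_le_iff₀ (by positivity), mul_comm]
  exact hC l m hm

theorem seqAvg_le_five_mul {N : ℕ} (hN₀ : 0 < N) (hN : N ≤ 2 * n) :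
    seqAvg a n ≤ 5 * seqAvg a N := by
  rcases eq_or_ne (seqAvg a N) ⊤ with htop | htop
  · simp [htop]
  obtain ⟨p, rfl⟩ : ∃ p, N = p + 1 := ⟨N - 1, by omega⟩
  set A := (seqAvg a (p + 1)).toReal
  have hA : 0 ≤ A := ENNReal.toReal_nonneg
  have h5 : 5 * seqAvg a (p + 1) = ENNReal.ofReal (5 * A) := by
    rw [ENNReal.ofReal_mul (by norm_num), ENNReal.ofReal_toReal htop, ENNReal.ofReal_ofNat]
  rw [h5]
  refine seqAvg_le_ofReal fun l m hm => ?_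
  set w := ∑ j ∈ Finset.Icc l (l + (m : ℤ)), a j
  set v := ∑ j ∈ Finset.Icc (l + (m : ℤ) + 1) (l + (m : ℤ) + 1 + (p : ℤ)), a j
  have hwv : ‖w + v‖ ≤ ((m + p + 1 : ℕ) + 1) * A := by
    rw [← Finset.sum_Icc_int_append]
    exact norm_sum_Icc_le_mul_seqAvg htop l (by omega)
  have hv : ‖v‖ ≤ ((p : ℕ) + 1) * A := norm_sum_Icc_le_mul_seqAvg htop _ le_rfl
  have hpm : (p : ℝ) + 1 ≤ 2 * ((m : ℝ) + 1) := by exact_mod_cast (by omega : p + 1 ≤ 2 * (m + 1))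
  push_cast at hwv
  calc ‖w‖ = ‖(w + v) - v‖ := by rw [add_sub_cancel_right]
    _ ≤ ‖w + v‖ + ‖v‖ := norm_sub_le _ _
    _ ≤ (m + 1) * (5 * A) := by nlinarith

end seqAvg

theorem avg_dyadic_almost_monotone_general (a : ℤ → ℂ) (k : ℕ) :
    seqAvg a (2 ^ k) ≤ 5 * seqAvg a (2 ^ (k + 1)) :=
  seqAvg_le_five_mul (by positivity) (by rw [pow_succ, mul_comm])

/-- If the first average `ã₁` of a complex sequence is finite, then for every
`k ≥ 0` one has `ã_{2^k} ≤ 5 · ã_{2^{k+1}}`. -/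
theorem avg_dyadic_almost_monotone (a : ℤ → ℂ) (h : seqAvg a 1 ≠ ⊤) (k : ℕ) :
    seqAvg a (2 ^ k) ≤ 5 * seqAvg a (2 ^ (k + 1)) :=
  avg_dyadic_almost_monotone_general a k
end

section
/- Let 1 < q < ∞ and f ∈ L_{q,1}([−π,π]) with Fourier coefficients {a_k}_{k∈ℤ}. Then ‖a‖_{n_{q',∞}} := sup_{k≥1} k^{1/q'} ã_k ≤ ‖f‖_{L_{q,1}([−π,π])}, where ã_k = sup over intervals w ⊂ ℤ with |w| ≥ k of (1/|w|)|∑_{m∈w} a_m| and q' = q/(q−1). -/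
open scoped Real ENNReal BigOperators
open MeasureTheory

/-- The decreasing rearrangement `f*` of a function `f` on `[-π, π]`. -/
noncomputable def decRearr (f : ℝ → ℂ) (t : ℝ) : ℝ :=
  sInf {σ : ℝ | 0 ≤ σ ∧ volume {x ∈ Set.Icc (-π) π | σ < ‖f x‖} ≤ ENNReal.ofReal t}

open Set Filter Topology

/-!
For an interval `w = [l, l + m]` of `N = m + 1` integers, `∑_{j ∈ w} a_j = (1/2π) ∫ f D` where
the modulated Dirichlet kernel `D` satisfies `|D x| ≤ min(N, π/|x|)` (geometric sum and Jordan's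
inequality). The superlevel sets `{min(N, π/|x|) > σ}` have measure at most `min(2π, 2π/σ)`, so
the Hardy–Littlewood rearrangement inequality gives
`∫ |f| min(N, π/|x|) ≤ ∫_0^{2π} f*(t) min(N, 2π/t) dt`; it follows from the layer-cake formula
for the weight together with `∫_A |f| ≤ ∫_0^{|A|} f*`.
Finally `min(N, 2π/t) ≤ N^{1/q} (2π/t)^{1/q'}` and `k ≤ N` give
`k^{1/q'} N⁻¹ (2π)⁻¹ min(N, 2π/t) ≤ t^{1/q - 1}`.
-/

section Rearrangement

variable {α : Type*} [MeasurableSpace α] {μ : Measure α} {g : α → ℝ}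

noncomputable def decreasingRearrangement (μ : Measure α) (g : α → ℝ) (t : ℝ) : ℝ :=
  sInf {σ : ℝ | 0 ≤ σ ∧ μ {x | σ < g x} ≤ ENNReal.ofReal t}

lemma decreasingRearrangement_nonneg (t : ℝ) : 0 ≤ decreasingRearrangement μ g t :=
  Real.sInf_nonneg fun _ hσ => hσ.1

variable [IsFiniteMeasure μ]

lemma tendsto_measure_setOf_lt_atTop (hg : AEMeasurable g μ) :
    Tendsto (fun σ : ℝ => μ {x | σ < g x}) atTop (𝓝 0) := by
  have hempty : ⋂ σ : ℝ, {x | σ < g x} = ∅ :=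
    eq_empty_of_forall_notMem fun x hx => lt_irrefl (g x) (mem_iInter.1 hx (g x))
  simpa [Function.comp_def, hempty] using tendsto_measure_iInter_atTop
    (fun σ => nullMeasurableSet_lt aemeasurable_const hg)
    (fun _ τ hστ x (hx : τ < g x) => hστ.trans_lt hx) ⟨0, measure_ne_top μ _⟩

lemma nonempty_setOf_measure_setOf_lt_le (hg : AEMeasurable g μ) {t : ℝ}
    (ht : 0 < t) : {σ : ℝ | 0 ≤ σ ∧ μ {x | σ < g x} ≤ ENNReal.ofReal t}.Nonempty := by
  obtain ⟨σ, hσ, hσ0⟩ := (((tendsto_measure_setOf_lt_atTop hg).eventually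
    (gt_mem_nhds (ENNReal.ofReal_pos.2 ht))).and (eventually_ge_atTop 0)).exists
  exact ⟨σ, hσ0, hσ.le⟩

lemma le_decreasingRearrangement (hg : AEMeasurable g μ) {t u : ℝ}
    (ht : 0 < t) (hu : ENNReal.ofReal t < μ {x | u < g x}) :
    u ≤ decreasingRearrangement μ g t := by
  refine le_csInf (nonempty_setOf_measure_setOf_lt_le hg ht) fun σ ⟨_, hσ⟩ => ?_
  by_contra! hσu
  exact ((measure_mono fun x (hx : u < g x) => hσu.trans hx).trans hσ).not_gt hu

lemma decreasingRearrangement_antitoneOn (hg : AEMeasurable g μ) :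
    AntitoneOn (decreasingRearrangement μ g) (Ioi 0) := fun _ hs _ _ hst =>
  csInf_le_csInf ⟨0, fun _ hσ => hσ.1⟩ (nonempty_setOf_measure_setOf_lt_le hg hs)
    fun _ ⟨hσ0, hσ⟩ => ⟨hσ0, hσ.trans (ENNReal.ofReal_le_ofReal hst)⟩

lemma aemeasurable_decreasingRearrangement (hg : AEMeasurable g μ) {c : ℝ} :
    AEMeasurable (decreasingRearrangement μ g) (volume.restrict (Ioc 0 c)) :=
  (aemeasurable_restrict_of_antitoneOn measurableSet_Ioi
    (decreasingRearrangement_antitoneOn hg)).mono_measure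
    (Measure.restrict_mono Ioc_subset_Ioi_self le_rfl)

theorem setLIntegral_le_lintegral_decreasingRearrangement (hg : AEMeasurable g μ)
    (hg0 : 0 ≤ᵐ[μ] g) {A : Set α} (hA : MeasurableSet A) :
    ∫⁻ x in A, ENNReal.ofReal (g x) ∂μ ≤
      ∫⁻ t in Ioc 0 (μ A).toReal, ENNReal.ofReal (decreasingRearrangement μ g t) := by
  -- Strict superlevel sets on the left and non-strict ones on the right match
  -- `le_decreasingRearrangement`.
  rw [lintegral_eq_lintegral_meas_lt _ (ae_restrict_of_ae hg0) hg.restrict,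
    lintegral_eq_lintegral_meas_le _ (ae_of_all _ decreasingRearrangement_nonneg)
      (aemeasurable_decreasingRearrangement hg)]
  refine lintegral_mono fun u => ?_
  set r := min (μ A).toReal (μ {x | u < g x}).toReal
  calc μ.restrict A {x | u < g x} ≤ ENNReal.ofReal r := by
        rw [Measure.restrict_apply' hA, ENNReal.ofReal_min,
          ENNReal.ofReal_toReal (measure_ne_top _ _), ENNReal.ofReal_toReal (measure_ne_top _ _)]
        exact le_min (measure_mono inter_subset_right) (measure_mono inter_subset_left)
    _ = volume (Ioo 0 r) := by rw [Real.volume_Ioo, sub_zero]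
    _ ≤ volume.restrict (Ioc 0 (μ A).toReal) {t | u ≤ decreasingRearrangement μ g t} := by
        rw [Measure.restrict_apply' measurableSet_Ioc]
        refine measure_mono fun t ht => ⟨le_decreasingRearrangement hg ht.1 ?_, ht.1,
          ht.2.le.trans (min_le_left _ _)⟩
        exact (ENNReal.ofReal_lt_iff_lt_toReal ht.1.le (measure_ne_top _ _)).2
          (ht.2.trans_le (min_le_right _ _))

/-- Hardy–Littlewood inequality, for a weight `w'` on `(0, c]` dominating the decreasing
rearrangement of `w`. -/
theorem lintegral_mul_le_lintegral_decreasingRearrangement_mul (hg : AEMeasurable g μ)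
    (hg0 : 0 ≤ᵐ[μ] g) {w : α → ℝ} (hw : Measurable w) (hw0 : 0 ≤ w) {c : ℝ}
    {w' : ℝ → ℝ} (hw' : Measurable w') (hw'0 : 0 ≤ᵐ[volume.restrict (Ioc 0 c)] w')
    (hww' : ∀ σ > 0, Ioc 0 (μ {x | σ < w x}).toReal ⊆ Ioc 0 c ∩ {t | σ ≤ w' t}) :
    ∫⁻ x, ENNReal.ofReal (g x) * ENNReal.ofReal (w x) ∂μ ≤
      ∫⁻ t in Ioc 0 c, ENNReal.ofReal (decreasingRearrangement μ g t) *
        ENNReal.ofReal (w' t) := by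
  set F := decreasingRearrangement μ g
  have hG : AEMeasurable (fun x => ENNReal.ofReal (g x)) μ := hg.ennreal_ofReal
  have hF : AEMeasurable (fun t => ENNReal.ofReal (F t)) (volume.restrict (Ioc 0 c)) :=
    (aemeasurable_decreasingRearrangement hg).ennreal_ofReal
  calc ∫⁻ x, ENNReal.ofReal (g x) * ENNReal.ofReal (w x) ∂μ
      = ∫⁻ x, ENNReal.ofReal (w x) ∂μ.withDensity fun x => ENNReal.ofReal (g x) :=
        (lintegral_withDensity_eq_lintegral_mul₀ hG hw.ennreal_ofReal.aemeasurable).symm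
    _ = ∫⁻ σ in Ioi 0, ∫⁻ x in {x | σ < w x}, ENNReal.ofReal (g x) ∂μ := by
        rw [lintegral_eq_lintegral_meas_lt _ (ae_of_all _ hw0) hw.aemeasurable]
        exact setLIntegral_congr_fun measurableSet_Ioi fun σ _ =>
          withDensity_apply _ (measurableSet_lt measurable_const hw)
    _ ≤ ∫⁻ σ in Ioi 0, ∫⁻ t in Ioc 0 c ∩ {t | σ ≤ w' t}, ENNReal.ofReal (F t) :=
        setLIntegral_mono' measurableSet_Ioi fun σ hσ =>
          (setLIntegral_le_lintegral_decreasingRearrangement hg hg0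
            (measurableSet_lt measurable_const hw)).trans (lintegral_mono_set (hww' σ hσ))
    _ = ∫⁻ t, ENNReal.ofReal (w' t)
          ∂(volume.restrict (Ioc 0 c)).withDensity fun t => ENNReal.ofReal (F t) := by
        rw [lintegral_eq_lintegral_meas_le _
            ((withDensity_absolutelyContinuous _ _).ae_le hw'0) hw'.aemeasurable]
        refine setLIntegral_congr_fun measurableSet_Ioi fun σ _ => ?_
        rw [withDensity_apply _ (measurableSet_le measurable_const hw'),
          Measure.restrict_restrict (measurableSet_le measurable_const hw'), inter_comm]
    _ = ∫⁻ t in Ioc 0 c, ENNReal.ofReal (F t) * ENNReal.ofReal (w' t) :=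
        lintegral_withDensity_eq_lintegral_mul₀ hF hw'.ennreal_ofReal.aemeasurable

end Rearrangement

lemma sum_Icc_zpow_mul_sub_one {K : Type*} [Field K] {z : K} (hz : z ≠ 0) (l : ℤ) (m : ℕ) :
    (∑ j ∈ Finset.Icc l (l + m), z ^ j) * (z - 1) = z ^ (l + m + 1) - z ^ l := by
  induction m with
  | zero => simp [zpow_add_one₀ hz, mul_sub]
  | succ m ih =>
    rw [Nat.cast_succ, ← add_assoc, ← Finset.insert_Icc_right_eq_Icc_add_one (by omega),
      Finset.sum_insert (by simp), add_mul, ih, zpow_add_one₀ hz (l + m + 1)]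
    ring

lemma two_mul_abs_div_pi_le_norm_exp_I_mul_sub_one {x : ℝ} (hx : |x| ≤ π) :
    2 * |x| / π ≤ ‖Complex.exp (Complex.I * x) - 1‖ := by
  have hsin := Real.mul_abs_le_abs_sin (x := x / 2) (by rw [abs_div, abs_two]; linarith)
  rw [Complex.norm_exp_I_mul_ofReal_sub_one, norm_mul, Real.norm_eq_abs, Real.norm_eq_abs,
    abs_two]
  rw [abs_div, abs_two] at hsin
  calc 2 * |x| / π = 2 * (2 / π * (|x| / 2)) := by field_simp
    _ ≤ 2 * |Real.sin (x / 2)| := by gcongr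

noncomputable def intervalExpSum (l : ℤ) (m : ℕ) (x : ℝ) : ℂ :=
  ∑ j ∈ Finset.Icc l (l + m), Complex.exp (-Complex.I * j * x)

lemma intervalExpSum_eq_sum_zpow (l : ℤ) (m : ℕ) (x : ℝ) :
    intervalExpSum l m x =
      ∑ j ∈ Finset.Icc l (l + m), Complex.exp (Complex.I * (-x : ℝ)) ^ j := by
  refine Finset.sum_congr rfl fun j _ => ?_
  rw [← Complex.exp_int_mul]
  push_cast
  ring_nf

lemma norm_intervalExpSum_le_card (l : ℤ) (m : ℕ) (x : ℝ) :
    ‖intervalExpSum l m x‖ ≤ m + 1 := by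
  rw [intervalExpSum_eq_sum_zpow]
  refine (norm_sum_le _ _).trans ?_
  simp only [norm_zpow, Complex.norm_exp_I_mul_ofReal, one_zpow, Finset.sum_const, Int.card_Icc,
    nsmul_eq_mul, mul_one]
  norm_cast
  omega

lemma norm_intervalExpSum_le_pi_div_abs (l : ℤ) (m : ℕ) {x : ℝ} (hx : |x| ≤ π)
    (hx0 : x ≠ 0) :
    ‖intervalExpSum l m x‖ ≤ π / |x| := by
  set z := Complex.exp (Complex.I * (-x : ℝ))
  have hjordan : 2 * |x| / π ≤ ‖z - 1‖ := by
    simpa only [abs_neg] using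
      two_mul_abs_div_pi_le_norm_exp_I_mul_sub_one (x := -x) (by rwa [abs_neg])
  have hz1 : 0 < ‖z - 1‖ := lt_of_lt_of_le (by positivity) hjordan
  have htelescope : ‖intervalExpSum l m x‖ * ‖z - 1‖ ≤ 2 := by
    rw [← norm_mul, intervalExpSum_eq_sum_zpow, sum_Icc_zpow_mul_sub_one (Complex.exp_ne_zero _)]
    refine (norm_sub_le _ _).trans ?_
    simp only [norm_zpow, Complex.norm_exp_I_mul_ofReal, one_zpow]
    norm_num
  calc ‖intervalExpSum l m x‖ ≤ 2 / ‖z - 1‖ := (le_div_iff₀ hz1).2 htelescope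
    _ ≤ 2 / (2 * |x| / π) := by gcongr
    _ = π / |x| := by field_simp

lemma norm_intervalExpSum_le_min (l : ℤ) (m : ℕ) {x : ℝ} (hx : |x| ≤ π) (hx0 : x ≠ 0) :
    ‖intervalExpSum l m x‖ ≤ min (m + 1 : ℝ) (π / |x|) :=
  le_min (norm_intervalExpSum_le_card l m x) (norm_intervalExpSum_le_pi_div_abs l m hx hx0)

lemma restrict_Icc_measure_setOf_lt_min_div_abs_le {N σ : ℝ} (hσ : 0 < σ) :
    volume.restrict (Icc (-π) π) {x | σ < min N (π / |x|)} ≤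
      ENNReal.ofReal (min (2 * π) (2 * π / σ)) := by
  have hsub : {x | σ < min N (π / |x|)} ⊆ Ioo (-(π / σ)) (π / σ) := fun x hx => by
    have hx' : σ < π / |x| := (lt_min_iff.1 hx).2
    have hxpos : 0 < |x| := abs_pos.2 fun h => by
      rw [h, abs_zero, div_zero] at hx'
      linarith
    exact abs_lt.1 ((lt_div_comm₀ hσ hxpos).1 hx')
  rw [ENNReal.ofReal_min]
  refine le_min ?_ ?_
  · calc _ ≤ volume.restrict (Icc (-π) π) univ := measure_mono (subset_univ _)
      _ = _ := by rw [Measure.restrict_apply_univ, Real.volume_Icc]; ring_nf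
  · calc _ ≤ volume (Ioo (-(π / σ)) (π / σ)) :=
          (Measure.restrict_apply_le _ _).trans (measure_mono hsub)
      _ = _ := by rw [Real.volume_Ioo]; ring_nf

lemma Ioc_toReal_measure_setOf_lt_min_div_abs_subset {N σ : ℝ} (hσ : 0 < σ) :
    Ioc 0 (volume.restrict (Icc (-π) π) {x | σ < min N (π / |x|)}).toReal ⊆
      Ioc 0 (2 * π) ∩ {t | σ ≤ min N (2 * π / t)} := by
  rintro t ⟨ht0, ht⟩
  have hN : σ < N := by
    by_contra! hN
    have hempty : {x : ℝ | σ < min N (π / |x|)} = ∅ :=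
      eq_empty_of_forall_notMem fun x hx => (min_le_left _ _).trans hN |>.not_gt hx
    rw [hempty, measure_empty, ENNReal.toReal_zero] at ht
    linarith
  have hle := ht.trans (ENNReal.toReal_le_of_le_ofReal (by positivity)
    (restrict_Icc_measure_setOf_lt_min_div_abs_le (N := N) hσ))
  exact ⟨⟨ht0, hle.trans (min_le_left _ _)⟩,
    le_min hN.le ((le_div_comm₀ ht0 hσ).1 (hle.trans (min_le_right _ _)))⟩

lemma min_le_rpow_mul_rpow {a b α : ℝ} (ha : 0 ≤ a) (hb : 0 ≤ b) (hα0 : 0 ≤ α)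
    (hα1 : α ≤ 1) :
    min a b ≤ a ^ (1 - α) * b ^ α := by
  have hmin : 0 ≤ min a b := le_min ha hb
  calc min a b = min a b ^ (1 - α) * min a b ^ α := by
        rw [← Real.rpow_add' hmin (by norm_num), sub_add_cancel, Real.rpow_one]
    _ ≤ a ^ (1 - α) * b ^ α := by
        gcongr
        exacts [min_le_left _ _, min_le_right _ _]

lemma rpow_div_div_mul_min_le {α k N L t : ℝ} (hα0 : 0 ≤ α) (hα1 : α ≤ 1) (hk : 0 ≤ k)
    (hkN : k ≤ N) (hL : 1 ≤ L) (ht : 0 < t) :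
    k ^ α / N / L * min N (L / t) ≤ t ^ (-α) := by
  obtain rfl | hN := (hk.trans hkN).eq_or_lt
  · simp only [div_zero, zero_div, zero_mul]
    positivity
  calc k ^ α / N / L * min N (L / t) ≤ N ^ α / N / L * (N ^ (1 - α) * (L / t) ^ α) := by
        gcongr
        exact min_le_rpow_mul_rpow hN.le (by positivity) hα0 hα1
    _ = L ^ (α - 1) * t ^ (-α) := by
        rw [Real.div_rpow (by positivity) ht.le, Real.rpow_sub_one (by positivity),
          Real.rpow_neg ht.le, Real.rpow_sub hN, Real.rpow_one]
        field_simp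
    _ ≤ t ^ (-α) := by
        apply mul_le_of_le_one_left (by positivity)
        exact Real.rpow_le_one_of_one_le_of_nonpos hL (by linarith)

lemma ofReal_rpow_mul_div_le_lintegral {F : ℝ → ℝ} (hF : ∀ t, 0 ≤ F t) {α k N L S : ℝ}
    (hα0 : 0 ≤ α) (hα1 : α ≤ 1) (hk : 0 ≤ k) (hkN : k ≤ N) (hL : 1 ≤ L)
    (hS : ENNReal.ofReal S ≤ ENNReal.ofReal (1 / L) *
      ∫⁻ t in Ioc 0 L, ENNReal.ofReal (F t) * ENNReal.ofReal (min N (L / t))) :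
    ENNReal.ofReal (k ^ α) * ENNReal.ofReal (S / N) ≤
      ∫⁻ t in Ioc 0 L, ENNReal.ofReal (F t * t ^ (-α)) := by
  have hN : 0 ≤ N := hk.trans hkN
  calc ENNReal.ofReal (k ^ α) * ENNReal.ofReal (S / N)
      = ENNReal.ofReal (k ^ α / N) * ENNReal.ofReal S := by
        rw [← ENNReal.ofReal_mul (by positivity), ← ENNReal.ofReal_mul (by positivity)]
        ring_nf
    _ ≤ ENNReal.ofReal (k ^ α / N) * (ENNReal.ofReal (1 / L) *
          ∫⁻ t in Ioc 0 L, ENNReal.ofReal (F t) * ENNReal.ofReal (min N (L / t))) := by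
        gcongr
    _ = ∫⁻ t in Ioc 0 L,
          ENNReal.ofReal (F t) * ENNReal.ofReal (k ^ α / N / L * min N (L / t)) := by
        rw [← mul_assoc, ← ENNReal.ofReal_mul (by positivity), mul_one_div,
          ← lintegral_const_mul' _ _ ENNReal.ofReal_ne_top]
        refine lintegral_congr fun t => ?_
        rw [ENNReal.ofReal_mul (p := _ / _) (by positivity)]
        ring
    _ ≤ ∫⁻ t in Ioc 0 L, ENNReal.ofReal (F t * t ^ (-α)) :=
        setLIntegral_mono' measurableSet_Ioc fun t ht => by
          rw [ENNReal.ofReal_mul (hF t)]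
          gcongr
          exact rpow_div_div_mul_min_le hα0 hα1 hk hkN hL ht.1

lemma decRearr_eq_decreasingRearrangement (f : ℝ → ℂ) :
    decRearr f = decreasingRearrangement (volume.restrict (Icc (-π) π)) fun x => ‖f x‖ := by
  ext t
  simp only [decRearr, decreasingRearrangement, Measure.restrict_apply' measurableSet_Icc,
    inter_comm]
  rfl

lemma setLIntegral_norm_mul_min_le {f : ℝ → ℂ}
    (hf : AEStronglyMeasurable f (volume.restrict (Icc (-π) π))) {N : ℝ} (hN : 0 ≤ N) :
    ∫⁻ x in Icc (-π) π, ENNReal.ofReal ‖f x‖ * ENNReal.ofReal (min N (π / |x|)) ≤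
      ∫⁻ t in Ioc 0 (2 * π),
        ENNReal.ofReal (decreasingRearrangement (volume.restrict (Icc (-π) π)) (‖f ·‖) t) *
          ENNReal.ofReal (min N (2 * π / t)) := by
  refine lintegral_mul_le_lintegral_decreasingRearrangement_mul hf.norm.aemeasurable
    (ae_of_all _ fun _ => norm_nonneg _)
    (measurable_const.min (measurable_const.div measurable_abs))
    (fun x => le_min hN (div_nonneg Real.pi_pos.le (abs_nonneg x)))
    (measurable_const.min (measurable_const.div measurable_id)) ?_
    fun σ hσ => Ioc_toReal_measure_setOf_lt_min_div_abs_subset hσ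
  filter_upwards [ae_restrict_mem measurableSet_Ioc] with t ht
  exact le_min hN (div_nonneg (by positivity) ht.1.le)

lemma sum_Icc_eq_integral_mul_intervalExpSum {f : ℝ → ℂ} (hf : IntegrableOn f (Icc (-π) π))
    {a : ℤ → ℂ} (ha : ∀ m : ℤ, a m = (1 / (2 * (π : ℂ))) *
      ∫ x in (-π)..π, f x * Complex.exp (-Complex.I * (m : ℂ) * (x : ℂ)))
    (l : ℤ) (m : ℕ) :
    ∑ j ∈ Finset.Icc l (l + m), a j =
      1 / (2 * π) * ∫ x in (-π)..π, f x * intervalExpSum l m x := by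
  simp_rw [ha, intervalExpSum, Finset.mul_sum]
  rw [intervalIntegral.integral_finsetSum fun j _ =>
    (intervalIntegrable_iff_integrableOn_Icc_of_le (by linarith [Real.pi_pos])).2
      (hf.mul_continuousOn (by fun_prop) isCompact_Icc), Finset.mul_sum]

lemma ofReal_norm_sum_Icc_le {f : ℝ → ℂ} (hf : IntegrableOn f (Icc (-π) π))
    {a : ℤ → ℂ} (ha : ∀ m : ℤ, a m = (1 / (2 * (π : ℂ))) *
      ∫ x in (-π)..π, f x * Complex.exp (-Complex.I * (m : ℂ) * (x : ℂ)))
    (l : ℤ) (m : ℕ) :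
    ENNReal.ofReal ‖∑ j ∈ Finset.Icc l (l + m), a j‖ ≤ ENNReal.ofReal (1 / (2 * π)) *
      ∫⁻ x in Icc (-π) π,
        ENNReal.ofReal ‖f x‖ * ENNReal.ofReal (min (m + 1 : ℝ) (π / |x|)) := by
  rw [sum_Icc_eq_integral_mul_intervalExpSum hf ha, norm_mul, ENNReal.ofReal_mul (norm_nonneg _),
    intervalIntegral.integral_of_le (by linarith [Real.pi_pos])]
  gcongr
  · simp [abs_of_pos Real.pi_pos]
  calc ENNReal.ofReal ‖∫ x in Ioc (-π) π, f x * intervalExpSum l m x‖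
      = ‖∫ x in Ioc (-π) π, f x * intervalExpSum l m x‖ₑ := ofReal_norm _
    _ ≤ ∫⁻ x in Ioc (-π) π, ‖f x * intervalExpSum l m x‖ₑ :=
        enorm_integral_le_lintegral_enorm _
    _ ≤ ∫⁻ x in Icc (-π) π, ‖f x * intervalExpSum l m x‖ₑ :=
        lintegral_mono_set Ioc_subset_Icc_self
    _ ≤ _ := by
      refine lintegral_mono_ae ?_
      -- `π / |x|` is `0` at `x = 0`, so the kernel bound only holds almost everywhere.
      filter_upwards [ae_restrict_mem measurableSet_Icc,
        ae_restrict_of_ae (Measure.ae_ne volume 0)] with x hx hx0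
      rw [enorm_mul, ← ofReal_norm, ← ofReal_norm]
      gcongr
      exact norm_intervalExpSum_le_min l m (abs_le.2 hx) hx0

/-- For `1 < q < ∞` and `f ∈ L_{q,1}([-π,π])` with Fourier coefficients `a`,
the net-space norm bound `‖a‖_{n_{q',∞}} = sup_{k≥1} k^{1/q'} ã_k ≤ ‖f‖_{L_{q,1}}`
holds, where `1/q' = 1 - 1/q` and `‖f‖_{L_{q,1}} = ∫_0^{2π} t^{1/q-1} f*(t) dt`. -/
theorem net_norm_le_lorentz_norm (q : ℝ) (hq : 1 < q) (f : ℝ → ℂ)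
    (hf : IntegrableOn f (Set.Icc (-π) π))
    (hfq : IntegrableOn (fun t => decRearr f t * t ^ (1 / q - 1)) (Set.Ioc (0 : ℝ) (2 * π)))
    (a : ℤ → ℂ)
    (ha : ∀ m : ℤ, a m = (1 / (2 * (π : ℂ))) *
        ∫ x in (-π)..π, f x * Complex.exp (-Complex.I * (m : ℂ) * (x : ℂ))) :
    ∀ k : ℕ, 1 ≤ k →
      ENNReal.ofReal ((k : ℝ) ^ (1 - 1 / q)) * seqAvg a k ≤
        ENNReal.ofReal (∫ t in Set.Ioc (0 : ℝ) (2 * π), decRearr f t * t ^ (1 / q - 1)) := by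
  intro k _
  have hq0 : 0 ≤ 1 / q := by positivity
  have hq1 : 1 / q ≤ 1 := (div_le_one (by linarith)).2 hq.le
  rw [decRearr_eq_decreasingRearrangement] at hfq ⊢
  rw [ofReal_integral_eq_lintegral_ofReal hfq (by
    filter_upwards [ae_restrict_mem measurableSet_Ioc] with t ht
    exact mul_nonneg (decreasingRearrangement_nonneg t) (Real.rpow_nonneg ht.1.le _))]
  simp only [seqAvg, ENNReal.mul_iSup, iSup_le_iff]
  intro l m hkm
  have hsum := (ofReal_norm_sum_Icc_le hf ha l m).trans <| mul_le_mul_of_nonneg_left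
    (setLIntegral_norm_mul_min_le hf.aestronglyMeasurable (N := m + 1) (by positivity)) zero_le
  simpa only [neg_sub] using ofReal_rpow_mul_div_le_lintegral decreasingRearrangement_nonneg
    (α := 1 - 1 / q) (by linarith) (by linarith) k.cast_nonneg (by exact_mod_cast hkm)
    (by linarith [Real.pi_gt_three]) hsum
end

section
/- Let 1 < p < ∞ and let f have Fourier series ∑_{k∈ℤ} a_k e^{ikx} with only finitely many nonzero coefficients, and define I_p(f) = (∑_{k=0}^∞ (2^{k/p'} Θ_k(f))^p)^{1/p} where Θ_k(f) = ∑_{⌊2^{k−1}⌋ ≤ |m| < 2^k} |Δa_m|. For N ∈ ℕ let S_N(f) = ∑_{m=−2^N}^{2^N} a_m e^{imx}. Then I_p(S_N(f)) ≤ 2^{1/p'} I_p(f). -/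
open scoped ENNReal BigOperators

/-- The symmetric difference `|Δa_m|`: `|a_m - a_{m+1}|` for `m > 0`,
`|a_m - a_{m-1}|` for `m < 0`, and `|a_0 - a_1| + |a_0 - a_{-1}|` for `m = 0`. -/
noncomputable def symDiff (a : ℤ → ℂ) (m : ℤ) : ℝ :=
  if 0 < m then ‖a m - a (m + 1)‖
  else if m < 0 then ‖a m - a (m - 1)‖
  else ‖a 0 - a 1‖ + ‖a 0 - a (-1)‖

/-- `⌊2^{k-1}⌋`: equals `2^{k-1}` for `k ≥ 1` and `0` for `k = 0`. -/
def dyadLo (k : ℕ) : ℤ := if k = 0 then 0 else 2 ^ (k - 1)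

/-- `Θ_k(a) = ∑_{⌊2^{k-1}⌋ ≤ |m| < 2^k} |Δa_m|`. -/
noncomputable def Theta (a : ℤ → ℂ) (k : ℕ) : ℝ :=
  ∑ m ∈ (Finset.Icc (-(2 ^ k : ℤ) + 1) ((2 ^ k : ℤ) - 1)).filter
      (fun m => dyadLo k ≤ |m|), symDiff a m

/-- `I_p(a) = (∑_{k≥0} (2^{k/p'} Θ_k(a))^p)^{1/p}` with `1/p' = 1 - 1/p`. -/
noncomputable def Ip (p : ℝ) (a : ℤ → ℂ) : ℝ≥0∞ :=
  (∑' k : ℕ, (ENNReal.ofReal ((2 : ℝ) ^ ((k : ℝ) * (1 - 1 / p)) * Theta a k)) ^ p) ^ (1 / p)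

/-! Truncating `a` at `|m| ≤ 2^N` leaves `Θ_k` unchanged for `k ≤ N`, kills it for `k ≥ N + 2`,
and turns `Θ_{N+1}` into `|a_{2^N}| + |a_{-2^N}|`. As `a` has finite support, telescoping bounds
`|a_{±2^N}|` by the variation of `a` beyond `±2^N`, that is by `∑_{k > N} Θ_k(a)`. Hölder's
inequality with the weights `2^{-k/p'}`, whose `p'`-th powers sum to `2^{-N}`, then gives
`2^{(N+1)/p'} Θ_{N+1}(S_N f) ≤ 2^{1/p'} (∑_{k > N} (2^{k/p'} Θ_k(f))^p)^{1/p}`, and the factor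
`2^{1/p'} ≥ 1` absorbs the unchanged terms. -/

namespace ENNReal

theorem inner_le_Lp_mul_Lq_tsum {ι : Type*} {p q : ℝ} (hpq : p.HolderConjugate q)
    (f g : ι → ℝ≥0∞) :
    ∑' i, f i * g i ≤ (∑' i, f i ^ p) ^ (1 / p) * (∑' i, g i ^ q) ^ (1 / q) := by
  rw [ENNReal.tsum_eq_iSup_sum]
  refine iSup_le fun s => (ENNReal.inner_le_Lp_mul_Lq s f g hpq).trans ?_
  gcongr
  · exact one_div_nonneg.2 hpq.nonneg
  · exact ENNReal.sum_le_tsum s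
  · exact one_div_nonneg.2 hpq.symm.nonneg
  · exact ENNReal.sum_le_tsum s

theorem tsum_le_two_rpow_mul_weighted {p : ℝ} (hp : 1 < p) (x : ℕ → ℝ≥0∞) :
    ∑' k, x k ≤
      2 ^ (1 - 1 / p) * (∑' k : ℕ, ((2 : ℝ≥0∞) ^ ((k : ℝ) * (1 - 1 / p)) * x k) ^ p) ^ (1 / p) := by
  have hpq : p.HolderConjugate p.conjExponent := .conjExponent hp
  set q := p.conjExponent
  have hq : 1 - 1 / p = 1 / q := by
    have := hpq.inv_add_inv_eq_one
    rw [one_div, one_div]; linarith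
  have hweight : ∀ k : ℕ, ((2 : ℝ≥0∞) ^ (-((k : ℝ) * (1 / q)))) ^ q = 2⁻¹ ^ k := by
    intro k
    rw [← ENNReal.rpow_mul, neg_mul, mul_assoc, one_div_mul_cancel hpq.symm.ne_zero, mul_one,
      ENNReal.rpow_neg, ENNReal.rpow_natCast, ENNReal.inv_pow]
  have hgeom : ∑' k : ℕ, (2 : ℝ≥0∞)⁻¹ ^ k = 2 := by
    rw [ENNReal.tsum_geometric, ENNReal.one_sub_inv_two, inv_inv]
  calc ∑' k, x k
      = ∑' k : ℕ, ((2 : ℝ≥0∞) ^ ((k : ℝ) * (1 / q)) * x k) * 2 ^ (-((k : ℝ) * (1 / q))) := by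
        congr 1; ext k
        rw [mul_comm, ← mul_assoc, ← ENNReal.rpow_add _ _ two_ne_zero ENNReal.ofNat_ne_top,
          neg_add_cancel, ENNReal.rpow_zero, one_mul]
    _ ≤ _ := ENNReal.inner_le_Lp_mul_Lq_tsum hpq _ _
    _ = _ := by rw [hq, mul_comm]; simp only [hweight, hgeom]

theorem tsum_rpow_rpow_le_mul_of_le_tail {p : ℝ} (hp : 0 < p) {F G : ℕ → ℝ≥0∞} {c : ℝ≥0∞}
    (hc : 1 ≤ c) (n : ℕ) (hhead : ∀ k < n, G k = F k)
    (hn : G n ≤ c * (∑' k, F (k + n) ^ p) ^ (1 / p)) (htail : ∀ k, n < k → G k = 0) :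
    (∑' k, G k ^ p) ^ (1 / p) ≤ c * (∑' k, F k ^ p) ^ (1 / p) := by
  have hG : ∑' k, G k ^ p = ∑ k ∈ Finset.range n, F k ^ p + G n ^ p := by
    rw [tsum_eq_sum (s := Finset.range (n + 1)), Finset.sum_range_succ]
    · congr 1
      exact Finset.sum_congr rfl fun k hk => by rw [hhead k (Finset.mem_range.1 hk)]
    · intro k hk
      rw [htail k (by simpa using hk), zero_rpow_of_pos hp]
  have hGn : G n ^ p ≤ c ^ p * ∑' k, F (k + n) ^ p := by
    calc G n ^ p ≤ (c * (∑' k, F (k + n) ^ p) ^ (1 / p)) ^ p := by gcongr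
      _ = c ^ p * ∑' k, F (k + n) ^ p := by
        rw [mul_rpow_of_nonneg _ _ hp.le, ← rpow_mul, one_div_mul_cancel hp.ne', rpow_one]
  have hcp : 1 ≤ c ^ p := one_le_rpow hc hp
  calc (∑' k, G k ^ p) ^ (1 / p) ≤ (c ^ p * ∑' k, F k ^ p) ^ (1 / p) := by
        gcongr
        rw [hG, ← ENNReal.summable.sum_add_tsum_nat_add' (f := fun k => F k ^ p) (k := n), mul_add]
        exact add_le_add (le_mul_of_one_le_left' hcp) hGn
    _ = c * (∑' k, F k ^ p) ^ (1 / p) := by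
        rw [mul_rpow_of_nonneg _ _ (by positivity), ← rpow_mul, mul_one_div_cancel hp.ne', rpow_one]
end ENNReal

theorem Int.dist_le_Ico_sum_dist {α : Type*} [PseudoMetricSpace α] (f : ℤ → α) {m n : ℤ}
    (h : m ≤ n) : dist (f m) (f n) ≤ ∑ i ∈ Finset.Ico m n, dist (f i) (f (i + 1)) := by
  induction n, h using Int.leInduction with
  | base => simp
  | succ n hmn ih =>
    rw [← Finset.insert_Ico_right_eq_Ico_add_one hmn, Finset.sum_insert (by simp)]
    linarith [dist_triangle (f m) (f n) (f (n + 1))]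

section DyadicVariation

variable {E : Type*} [SeminormedAddCommGroup E]

noncomputable def dyadicVariation (a : ℤ → E) (k : ℕ) : ℝ :=
  ∑ m ∈ Finset.Ico (2 ^ k : ℤ) (2 ^ (k + 1)), ‖a m - a (m + 1)‖

theorem dyadicVariation_nonneg (a : ℤ → E) (k : ℕ) : 0 ≤ dyadicVariation a k :=
  Finset.sum_nonneg fun _ _ => norm_nonneg _

theorem norm_le_norm_add_dyadicVariation (a : ℤ → E) (k : ℕ) :
    ‖a (2 ^ k)‖ ≤ ‖a (2 ^ (k + 1))‖ + dyadicVariation a k := by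
  have hk : (2 ^ k : ℤ) ≤ 2 ^ (k + 1) := pow_le_pow_right₀ one_le_two k.le_succ
  have := Int.dist_le_Ico_sum_dist a hk
  simp only [dist_eq_norm] at this
  rw [dyadicVariation]
  linarith [norm_le_norm_add_norm_sub' (a (2 ^ k)) (a (2 ^ (k + 1)))]

theorem norm_le_norm_add_sum_dyadicVariation (a : ℤ → E) (N j : ℕ) :
    ‖a (2 ^ N)‖ ≤ ‖a (2 ^ (j + N))‖ + ∑ k ∈ Finset.range j, dyadicVariation a (k + N) := by
  induction j with
  | zero => simp
  | succ j ih =>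
    rw [Finset.sum_range_succ, Nat.add_right_comm]
    linarith [norm_le_norm_add_dyadicVariation a (j + N)]

theorem exists_apply_two_pow_add_eq_zero {a : ℤ → E} (ha : (Function.support a).Finite) (N : ℕ) :
    ∃ j : ℕ, a (2 ^ (j + N)) = 0 := by
  obtain ⟨B, hB⟩ := ha.bddAbove
  refine ⟨B.toNat, by_contra fun h => ?_⟩
  have hle : (2 : ℤ) ^ (B.toNat + N) ≤ B := hB h
  have hlt : (B.toNat : ℤ) < 2 ^ (B.toNat + N) := by
    exact_mod_cast B.toNat.lt_two_pow_self.trans_le (Nat.pow_le_pow_right two_pos (by omega))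
  omega

theorem ofReal_norm_le_tsum_dyadicVariation {a : ℤ → E} (ha : (Function.support a).Finite)
    (N : ℕ) : ENNReal.ofReal ‖a (2 ^ N)‖ ≤ ∑' k, ENNReal.ofReal (dyadicVariation a (k + N)) := by
  obtain ⟨j, hj⟩ := exists_apply_two_pow_add_eq_zero ha N
  have := norm_le_norm_add_sum_dyadicVariation a N j
  rw [hj, norm_zero, zero_add] at this
  calc ENNReal.ofReal ‖a (2 ^ N)‖
      ≤ ENNReal.ofReal (∑ k ∈ Finset.range j, dyadicVariation a (k + N)) :=
        ENNReal.ofReal_le_ofReal this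
    _ = ∑ k ∈ Finset.range j, ENNReal.ofReal (dyadicVariation a (k + N)) :=
        ENNReal.ofReal_sum_of_nonneg fun k _ => dyadicVariation_nonneg a _
    _ ≤ _ := ENNReal.sum_le_tsum _

end DyadicVariation

theorem Theta_succ (a : ℤ → ℂ) (k : ℕ) :
    Theta a (k + 1) = dyadicVariation a k + dyadicVariation (fun m => a (-m)) k := by
  set I := Finset.Ico (2 ^ k : ℤ) (2 ^ (k + 1))
  have hpos : ∀ m ∈ I, 0 < m := fun m hm => (Finset.mem_Ico.1 hm).1.trans_lt' (by positivity)
  have hsplit : (Finset.Icc (-(2 ^ (k + 1) : ℤ) + 1) (2 ^ (k + 1) - 1)).filter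
      (fun m => dyadLo (k + 1) ≤ |m|) = I ∪ I.map (Equiv.neg ℤ).toEmbedding := by
    ext m
    simp only [I, Finset.mem_filter, Finset.mem_Icc, Finset.mem_union, Finset.mem_Ico,
      Finset.mem_map_equiv, Equiv.neg_symm, Equiv.neg_apply, dyadLo, Nat.add_one_ne_zero,
      if_false, Nat.add_sub_cancel, le_abs]
    have : (2 : ℤ) ^ (k + 1) = 2 * 2 ^ k := by ring
    have : (0 : ℤ) < 2 ^ k := by positivity
    omega
  have hdisj : Disjoint I (I.map (Equiv.neg ℤ).toEmbedding) :=
    Finset.disjoint_left.2 fun m hm hm' => by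
      have := hpos _ (Finset.mem_map_equiv.1 hm')
      simp only [Equiv.neg_symm, Equiv.neg_apply] at this
      linarith [hpos m hm]
  rw [Theta, hsplit, Finset.sum_union hdisj, Finset.sum_map]
  congr 1
  · exact Finset.sum_congr rfl fun m hm => by simp [symDiff, hpos m hm]
  · refine Finset.sum_congr rfl fun m hm => ?_
    have hm0 := hpos m hm
    simp only [Equiv.toEmbedding_apply, Equiv.neg_apply]
    rw [symDiff, if_neg (by omega), if_pos (by omega), neg_add']

theorem symDiff_congr {a b : ℤ → ℂ} {m : ℤ} (h : ∀ n, |n - m| ≤ 1 → a n = b n) :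
    symDiff a m = symDiff b m := by
  unfold symDiff
  split_ifs with hpos hneg
  · rw [h m (by simp), h (m + 1) (by simp)]
  · rw [h m (by simp), h (m - 1) (by simp)]
  · obtain rfl : m = 0 := by omega
    rw [h 0 (by simp), h 1 (by simp), h (-1) (by simp)]

theorem Theta_congr {a b : ℤ → ℂ} {k : ℕ} (h : ∀ m, |m| ≤ 2 ^ k → a m = b m) :
    Theta a k = Theta b k :=
  Finset.sum_congr rfl fun m hm => symDiff_congr fun n hn => h n <| by
    rw [Finset.mem_filter, Finset.mem_Icc] at hm
    rw [abs_le] at hn ⊢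
    omega

def partialSumCoeff {E : Type*} [Zero E] (N : ℕ) (a : ℤ → E) : ℤ → E :=
  fun m => if |m| ≤ (2 ^ N : ℤ) then a m else 0

section PartialSumCoeff

variable {E : Type*} [SeminormedAddCommGroup E]

theorem partialSumCoeff_comp_neg (N : ℕ) (a : ℤ → E) :
    (fun m => partialSumCoeff N a (-m)) = partialSumCoeff N (fun m => a (-m)) := by
  ext m
  simp [partialSumCoeff]

theorem dyadicVariation_partialSumCoeff_self (N : ℕ) (a : ℤ → E) :
    dyadicVariation (partialSumCoeff N a) N = ‖a (2 ^ N)‖ := by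
  have h0 : (0 : ℤ) < 2 ^ N := by positivity
  rw [dyadicVariation, Finset.sum_eq_single (2 ^ N : ℤ)]
  · simp [partialSumCoeff, abs_of_pos h0, abs_of_pos (h0.trans (lt_add_one _))]
  · intro m hm hne
    rw [Finset.mem_Ico] at hm
    have : ¬ |m| ≤ 2 ^ N := by rw [abs_of_pos (by omega)]; omega
    have : ¬ |m + 1| ≤ 2 ^ N := by rw [abs_of_pos (by omega)]; omega
    simp [partialSumCoeff, *]
  · simp [pow_succ]

theorem dyadicVariation_partialSumCoeff_of_lt {N k : ℕ} (a : ℤ → E) (h : N < k) :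
    dyadicVariation (partialSumCoeff N a) k = 0 := by
  have h0 : (0 : ℤ) < 2 ^ N := by positivity
  have hNk : (2 : ℤ) ^ N < 2 ^ k := pow_lt_pow_right₀ one_lt_two h
  refine Finset.sum_eq_zero fun m hm => ?_
  rw [Finset.mem_Ico] at hm
  have : ¬ |m| ≤ 2 ^ N := by rw [abs_of_pos (by omega)]; omega
  have : ¬ |m + 1| ≤ 2 ^ N := by rw [abs_of_pos (by omega)]; omega
  simp [partialSumCoeff, *]

end PartialSumCoeff

theorem Theta_partialSumCoeff_of_le {N k : ℕ} (a : ℤ → ℂ) (h : k ≤ N) :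
    Theta (partialSumCoeff N a) k = Theta a k :=
  Theta_congr fun _ hm => if_pos (hm.trans (pow_le_pow_right₀ one_le_two h))

theorem Theta_partialSumCoeff_succ (N : ℕ) (a : ℤ → ℂ) :
    Theta (partialSumCoeff N a) (N + 1) = ‖a (2 ^ N)‖ + ‖a (-2 ^ N)‖ := by
  rw [Theta_succ, partialSumCoeff_comp_neg, dyadicVariation_partialSumCoeff_self,
    dyadicVariation_partialSumCoeff_self]

theorem Theta_partialSumCoeff_of_lt {N k : ℕ} (a : ℤ → ℂ) (h : N + 1 < k) :
    Theta (partialSumCoeff N a) k = 0 := by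
  obtain ⟨j, rfl⟩ : ∃ j, k = j + 1 := ⟨k - 1, by omega⟩
  rw [Theta_succ, partialSumCoeff_comp_neg, dyadicVariation_partialSumCoeff_of_lt _ (by omega),
    dyadicVariation_partialSumCoeff_of_lt _ (by omega), add_zero]

theorem ofReal_norm_add_norm_le_tsum_Theta {a : ℤ → ℂ} (ha : (Function.support a).Finite)
    (N : ℕ) :
    ENNReal.ofReal (‖a (2 ^ N)‖ + ‖a (-2 ^ N)‖) ≤
      ∑' k, ENNReal.ofReal (Theta a (k + (N + 1))) := by
  have ha' : (Function.support fun m => a (-m)).Finite := ha.preimage neg_injective.injOn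
  simp only [← add_assoc, Theta_succ, ENNReal.ofReal_add (dyadicVariation_nonneg _ _)
    (dyadicVariation_nonneg _ _), ENNReal.ofReal_add (norm_nonneg _) (norm_nonneg _)]
  rw [ENNReal.tsum_add]
  exact add_le_add (ofReal_norm_le_tsum_dyadicVariation ha N)
    (ofReal_norm_le_tsum_dyadicVariation ha' N)

noncomputable def weightedTheta (p : ℝ) (a : ℤ → ℂ) (k : ℕ) : ℝ≥0∞ :=
  ENNReal.ofReal ((2 : ℝ) ^ ((k : ℝ) * (1 - 1 / p)) * Theta a k)

theorem weightedTheta_eq (p : ℝ) (a : ℤ → ℂ) (k : ℕ) :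
    weightedTheta p a k = 2 ^ ((k : ℝ) * (1 - 1 / p)) * ENNReal.ofReal (Theta a k) := by
  rw [weightedTheta, ENNReal.ofReal_mul (by positivity), ← ENNReal.ofReal_rpow_of_pos two_pos,
    ENNReal.ofReal_ofNat]

theorem weightedTheta_partialSumCoeff_succ_le {p : ℝ} (hp : 1 < p) {a : ℤ → ℂ}
    (ha : (Function.support a).Finite) (N : ℕ) :
    weightedTheta p (partialSumCoeff N a) (N + 1) ≤
      2 ^ (1 - 1 / p) * (∑' k, weightedTheta p a (k + (N + 1)) ^ p) ^ (1 / p) := by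
  calc weightedTheta p (partialSumCoeff N a) (N + 1)
      ≤ 2 ^ (((N + 1 : ℕ) : ℝ) * (1 - 1 / p)) * ∑' k, ENNReal.ofReal (Theta a (k + (N + 1))) := by
        rw [weightedTheta_eq, Theta_partialSumCoeff_succ]
        gcongr
        exact ofReal_norm_add_norm_le_tsum_Theta ha N
    _ = ∑' k, 2 ^ (((N + 1 : ℕ) : ℝ) * (1 - 1 / p)) * ENNReal.ofReal (Theta a (k + (N + 1))) :=
        ENNReal.tsum_mul_left.symm
    _ ≤ _ := ENNReal.tsum_le_two_rpow_mul_weighted hp _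
    _ = _ := by
        congr 4; ext k
        rw [weightedTheta_eq, ← mul_assoc, ← ENNReal.rpow_add _ _ two_ne_zero ENNReal.ofNat_ne_top,
          ← add_mul, ← Nat.cast_add]

/-- For a trigonometric polynomial `f` with coefficients `a` (finitely many
nonzero) and partial sum `S_N(f)` with coefficients `a_m` for `|m| ≤ 2^N`,
one has `I_p(S_N(f)) ≤ 2^{1/p'} I_p(f)`. -/
theorem Ip_partial_sum_le (p : ℝ) (hp1 : 1 < p) (a : ℤ → ℂ)
    (hfin : (Function.support a).Finite) (N : ℕ) :
    Ip p (fun m => if |m| ≤ (2 ^ N : ℤ) then a m else 0) ≤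
      ENNReal.ofReal ((2 : ℝ) ^ (1 - 1 / p)) * Ip p a := by
  have hc : (1 : ℝ≥0∞) ≤ 2 ^ (1 - 1 / p) :=
    ENNReal.one_le_rpow one_le_two (by rw [sub_pos, div_lt_one (by linarith)]; exact hp1)
  rw [← ENNReal.ofReal_rpow_of_pos two_pos, ENNReal.ofReal_ofNat]
  refine ENNReal.tsum_rpow_rpow_le_mul_of_le_tail (by linarith) hc (N + 1)
    (F := weightedTheta p a) (G := weightedTheta p (partialSumCoeff N a)) ?_
    (weightedTheta_partialSumCoeff_succ_le hp1 hfin N) ?_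
  · intro k hk
    rw [weightedTheta, weightedTheta, Theta_partialSumCoeff_of_le a (by omega)]
  · intro k hk
    rw [weightedTheta, Theta_partialSumCoeff_of_lt a hk, mul_zero, ENNReal.ofReal_zero]
end

section
/- Let 1 < p < ∞ and let {a_k}_{k∈ℤ} be a complex sequence with J_p(f) = (∑_{k∈ℤ} (|k|+1)^{p−2}|a_k|^p)^{1/p} < ∞. Define â_{2^r} = sup_{2^r ≤ |m| < 2^{r+1}} (1/(|m|+1))|∑_{s=0}^{m} a_s| and A_p(a) = (∑_{k=0}^∞ (2^{k/p'} sup_{r≥0} min(1,2^{r−k}) â_{2^r})^p)^{1/p}. Then A_p(a) ≤ C_p J_p(f). -/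
open scoped ENNReal BigOperators

/-- The partial sum `∑_{s=0}^{m} a_s`, interpreted as `∑_{s=m}^{0} a_s`
when `m < 0`. -/
noncomputable def psum (a : ℤ → ℂ) (m : ℤ) : ℂ :=
  ∑ j ∈ Finset.Icc (min m 0) (max m 0), a j

/-- `â_{2^r} = sup_{2^r ≤ |m| < 2^{r+1}} (1/(|m|+1)) |∑_{s=0}^{m} a_s|`. -/
noncomputable def hatAvg (a : ℤ → ℂ) (r : ℕ) : ℝ≥0∞ :=
  ⨆ (m : ℤ) (_ : (2 ^ r : ℤ) ≤ |m| ∧ |m| < 2 ^ (r + 1)),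
    ENNReal.ofReal (‖psum a m‖ / ((m.natAbs : ℝ) + 1))

/-!
Write `⟨j⟩ = |j| + 1` and `b_r = 2^{r/p'} â_{2^r}`. The kernel `2^{k/p'} min(1, 2^{r-k}) 2^{-r/p'}`
decays geometrically in `|k - r|`, so by Schur's test `A_p(a)^p ≲ ∑_r b_r^p`.

Since `|∑_{s=0}^{m} a_s| ≤ ∑_{|j| ≤ 2^{r+1}} |a_j|` for `|m| < 2^{r+1}`, Hölder's inequality with
weight `⟨j⟩^{1/p - 1}`, whose sum over `|j| ≤ 2^{r+1}` is `≲ 2^{r/p}`, gives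
`b_r^p ≲ 2^{-r/p} ∑_{|j| ≤ 2^{r+1}} ⟨j⟩^{p-2+1/p} |a_j|^p`. Summing over `r` and exchanging the
sums, each `j` only sees the geometric tail `∑_{2^{r+1} ≥ |j|} 2^{-r/p} ≲ ⟨j⟩^{-1/p}`, which
leaves `∑_j ⟨j⟩^{p-2} |a_j|^p = J_p(f)^p`.
-/

open ENNReal Finset

lemma ENNReal.two_rpow_add (x y : ℝ) : (2 : ℝ≥0∞) ^ (x + y) = 2 ^ x * 2 ^ y :=
  rpow_add x y two_ne_zero ofNat_ne_top

lemma ENNReal.rpow_le_two_rpow_of_le {x : ℝ≥0∞} {e p d : ℝ} (hp : 0 ≤ p) (hx : x ≤ 2 ^ e)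
    (hd : e * p ≤ d) : x ^ p ≤ 2 ^ d :=
  calc x ^ p ≤ (2 ^ e) ^ p := rpow_le_rpow hx hp
    _ = 2 ^ (e * p) := (rpow_mul _ _ _).symm
    _ ≤ 2 ^ d := rpow_le_rpow_of_exponent_le one_le_two hd

lemma ENNReal.one_sub_two_rpow_neg_inv_ne_top {x : ℝ} (hx : 0 < x) :
    (1 - (2 : ℝ≥0∞) ^ (-x))⁻¹ ≠ ⊤ :=
  inv_ne_top.mpr (tsub_pos_iff_lt.mpr
    (rpow_lt_one_of_one_lt_of_neg one_lt_two (neg_neg_of_pos hx))).ne'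

lemma ENNReal.tsum_geometric_tail (y : ℝ≥0∞) (n : ℕ) :
    ∑' r : ℕ, (if n ≤ r then y ^ r else 0) = y ^ n * (1 - y)⁻¹ := by
  rw [← ENNReal.summable.sum_add_tsum_nat_add' (k := n),
    sum_eq_zero fun r hr => if_neg (by simpa using hr), zero_add, ← ENNReal.tsum_geometric,
    ← ENNReal.tsum_mul_left]
  exact tsum_congr fun r => by rw [if_pos (by omega), pow_add, mul_comm]

lemma ENNReal.tsum_pow_natAbs (q : ℝ≥0∞) : ∑' n : ℤ, q ^ n.natAbs = (1 + q) * (1 - q)⁻¹ := by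
  rw [tsum_of_nat_of_neg_add_one ENNReal.summable ENNReal.summable]
  simp only [Int.natAbs_neg, ← Nat.cast_add_one, Int.natAbs_natCast, ENNReal.tsum_geometric,
    ENNReal.tsum_geometric_add_one]
  ring

lemma ENNReal.iSup_rpow_le_tsum_rpow {ι : Type*} {p : ℝ} (hp : 0 < p) (f : ι → ℝ≥0∞) :
    (⨆ i, f i) ^ p ≤ ∑' i, f i ^ p :=
  ((orderIsoRpow p hp).map_iSup f).trans_le (iSup_le ENNReal.le_tsum)

lemma ENNReal.tsum_rpow_iSup_mul_le {p : ℝ} (hp : 0 < p) (K : ℕ → ℕ → ℝ≥0∞) (x : ℕ → ℝ≥0∞) :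
    ∑' k, (⨆ r, K k r * x r) ^ p ≤ (⨆ r, ∑' k, K k r ^ p) * ∑' r, x r ^ p :=
  calc ∑' k, (⨆ r, K k r * x r) ^ p
      ≤ ∑' k, ∑' r, K k r ^ p * x r ^ p := ENNReal.tsum_le_tsum fun k =>
        (iSup_rpow_le_tsum_rpow hp _).trans_eq (tsum_congr fun r => mul_rpow_of_nonneg _ _ hp.le)
    _ = ∑' r, (∑' k, K k r ^ p) * x r ^ p := by
        rw [ENNReal.tsum_comm]; simp only [ENNReal.tsum_mul_right]
    _ ≤ (⨆ r, ∑' k, K k r ^ p) * ∑' r, x r ^ p := by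
        rw [← ENNReal.tsum_mul_left]
        exact ENNReal.tsum_le_tsum fun r => by gcongr; exact le_iSup (fun r => ∑' k, K k r ^ p) r

lemma Real.mul_add_one_rpow_sub_one_le {s x : ℝ} (hs0 : 0 ≤ s) (hs1 : s ≤ 1) (hx : 0 ≤ x) :
    s * (x + 1) ^ (s - 1) ≤ (x + 1) ^ s - x ^ s := by
  have hy : 0 < x + 1 := by linarith
  have hinv : (x + 1)⁻¹ ≤ 1 := inv_le_one_of_one_le₀ (by linarith)
  have hbernoulli := rpow_one_add_le_one_add_mul_self (by linarith : -1 ≤ -(x + 1)⁻¹) hs0 hs1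
  have hx' : x = (x + 1) * (1 + -(x + 1)⁻¹) := by field_simp; ring
  calc s * (x + 1) ^ (s - 1) = (x + 1) ^ s - (x + 1) ^ s * (1 + s * -(x + 1)⁻¹) := by
        rw [Real.rpow_sub_one hy.ne']; ring
    _ ≤ (x + 1) ^ s - (x + 1) ^ s * (1 + -(x + 1)⁻¹) ^ s := by gcongr
    _ = (x + 1) ^ s - x ^ s := by rw [← Real.mul_rpow hy.le (by linarith), ← hx']

lemma Real.sum_range_add_one_rpow_sub_one_le {s : ℝ} (hs0 : 0 < s) (hs1 : s ≤ 1) (N : ℕ) :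
    ∑ n ∈ range N, ((n : ℝ) + 1) ^ (s - 1) ≤ N ^ s / s := by
  rw [le_div_iff₀ hs0, sum_mul]
  calc ∑ n ∈ range N, ((n : ℝ) + 1) ^ (s - 1) * s
      ≤ ∑ n ∈ range N, (((n + 1 : ℕ) : ℝ) ^ s - (n : ℝ) ^ s) := by
        gcongr with n
        push_cast
        rw [mul_comm]
        exact Real.mul_add_one_rpow_sub_one_le hs0.le hs1 n.cast_nonneg
    _ = N ^ s := by rw [sum_range_sub (fun n : ℕ => (n : ℝ) ^ s)]; simp [Real.zero_rpow hs0.ne']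

lemma sum_Icc_neg_natAbs_le (M : ℕ) (f : ℕ → ℝ≥0∞) :
    ∑ j ∈ Icc (-(M : ℤ)) M, f j.natAbs ≤ 2 * ∑ n ∈ range (M + 1), f n := by
  have hsub : Icc (-(M : ℤ)) M ⊆
      (range (M + 1) ×ˢ {1, -1}).image fun x : ℕ × ℤ => x.2 * (x.1 : ℤ) := by
    intro j hj
    rw [mem_Icc] at hj
    simp only [mem_image, mem_product, mem_range, mem_insert, mem_singleton, Prod.exists]
    rcases Int.natAbs_eq j with h | h
    · exact ⟨j.natAbs, 1, by omega, by omega⟩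
    · exact ⟨j.natAbs, -1, by omega, by omega⟩
  calc ∑ j ∈ Icc (-(M : ℤ)) M, f j.natAbs
      ≤ ∑ j ∈ (range (M + 1) ×ˢ {1, -1}).image (fun x : ℕ × ℤ => x.2 * (x.1 : ℤ)),
          f j.natAbs := sum_le_sum_of_subset hsub
    _ ≤ ∑ x ∈ range (M + 1) ×ˢ {1, -1}, f (x.2 * (x.1 : ℤ)).natAbs :=
        sum_image_le_of_nonneg fun _ _ => zero_le
    _ = 2 * ∑ n ∈ range (M + 1), f n := by
        rw [sum_product, mul_sum]
        simp [two_mul]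

noncomputable def bracket (j : ℤ) : ℝ≥0∞ := (j.natAbs : ℝ≥0∞) + 1

noncomputable def dyadicBox (r : ℕ) : Finset ℤ := Icc (-2 ^ (r + 1)) (2 ^ (r + 1))

lemma bracket_ne_zero (j : ℤ) : bracket j ≠ 0 := by simp [bracket]

lemma bracket_ne_top (j : ℤ) : bracket j ≠ ⊤ := by simp [bracket]

lemma bracket_rpow_add (j : ℤ) (x y : ℝ) : bracket j ^ (x + y) = bracket j ^ x * bracket j ^ y :=
  rpow_add x y (bracket_ne_zero j) (bracket_ne_top j)

lemma bracket_eq_ofReal (j : ℤ) : bracket j = ENNReal.ofReal ((j.natAbs : ℝ) + 1) := by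
  rw [bracket, ofReal_add (by positivity) zero_le_one, ofReal_natCast, ofReal_one]

lemma mem_dyadicBox {r : ℕ} {j : ℤ} : j ∈ dyadicBox r ↔ j.natAbs ≤ 2 ^ (r + 1) := by
  rw [dyadicBox, mem_Icc, ← abs_le, Int.abs_eq_natAbs]
  norm_cast

lemma hatAvg_le (a : ℤ → ℂ) (r : ℕ) :
    hatAvg a r ≤ 2 ^ (-(r : ℝ)) * ∑ j ∈ dyadicBox r, ENNReal.ofReal ‖a j‖ := by
  refine iSup₂_le fun m ⟨hrm, hmr⟩ => ?_
  rw [Int.abs_eq_natAbs] at hrm hmr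
  norm_cast at hrm hmr
  have hsub : Icc (min m 0) (max m 0) ⊆ dyadicBox r := fun j hj => by
    rw [mem_Icc] at hj
    rw [mem_dyadicBox]
    omega
  have hnum : ENNReal.ofReal ‖psum a m‖ ≤ ∑ j ∈ dyadicBox r, ENNReal.ofReal ‖a j‖ :=
    calc ENNReal.ofReal ‖psum a m‖
        ≤ ENNReal.ofReal (∑ j ∈ Icc (min m 0) (max m 0), ‖a j‖) :=
          ofReal_le_ofReal (norm_sum_le _ _)
      _ = ∑ j ∈ Icc (min m 0) (max m 0), ENNReal.ofReal ‖a j‖ :=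
          ofReal_sum_of_nonneg fun _ _ => norm_nonneg _
      _ ≤ _ := sum_le_sum_of_subset hsub
  have hden : (2 : ℝ≥0∞) ^ (r : ℝ) ≤ ENNReal.ofReal ((m.natAbs : ℝ) + 1) := by
    rw [rpow_natCast, show (m.natAbs : ℝ) + 1 = ((m.natAbs + 1 : ℕ) : ℝ) by push_cast; rfl,
      ofReal_natCast]
    exact_mod_cast (by omega : 2 ^ r ≤ m.natAbs + 1)
  rw [ofReal_div_of_pos (by positivity), rpow_neg, mul_comm, ← div_eq_mul_inv]
  exact ENNReal.div_le_div hnum hden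

lemma sum_le_holder_bracket {p : ℝ} (hp : 1 < p) (s : Finset ℤ) (u : ℤ → ℝ≥0∞) :
    ∑ j ∈ s, u j ≤ (∑ j ∈ s, bracket j ^ (1 / p - 1)) ^ (1 - 1 / p) *
      (∑ j ∈ s, bracket j ^ (p - 2 + 1 / p) * u j ^ p) ^ (1 / p) := by
  have hp0 : 0 < p := by linarith
  have key := inner_le_weight_mul_Lp_of_nonneg s hp.le (fun j => bracket j ^ (1 / p - 1))
    (fun j => bracket j ^ (1 - 1 / p) * u j)
  simp only [← one_div] at key
  convert key using 3 with j _
  · rw [← mul_assoc, ← bracket_rpow_add]; simp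
  · refine sum_congr rfl fun j _ => ?_
    rw [mul_rpow_of_nonneg _ _ hp0.le, ← rpow_mul, ← mul_assoc, ← bracket_rpow_add]
    congr 2
    field_simp
    ring

lemma sum_dyadicBox_bracket_rpow_le {s : ℝ} (hs0 : 0 < s) (hs1 : s ≤ 1) (r : ℕ) :
    ∑ j ∈ dyadicBox r, bracket j ^ (s - 1) ≤
      ENNReal.ofReal (2 * 4 ^ s / s) * 2 ^ ((r : ℝ) * s) := by
  set M : ℕ := 2 ^ (r + 1)
  have hbox : dyadicBox r = Icc (-(M : ℤ)) M := by simp [dyadicBox, M]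
  have hM : ((M + 1 : ℕ) : ℝ) ≤ 4 * 2 ^ r := by
    have : 1 ≤ 2 ^ r := Nat.one_le_two_pow
    exact_mod_cast (by omega : M + 1 ≤ 4 * 2 ^ r)
  calc ∑ j ∈ dyadicBox r, bracket j ^ (s - 1)
      = ∑ j ∈ Icc (-(M : ℤ)) M,
          (fun n : ℕ => ENNReal.ofReal (((n : ℝ) + 1) ^ (s - 1))) j.natAbs := by
        rw [hbox]
        refine sum_congr rfl fun j _ => ?_
        rw [bracket_eq_ofReal, ofReal_rpow_of_pos (by positivity)]
    _ ≤ 2 * ∑ n ∈ range (M + 1), ENNReal.ofReal (((n : ℝ) + 1) ^ (s - 1)) :=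
        sum_Icc_neg_natAbs_le M _
    _ = ENNReal.ofReal (2 * ∑ n ∈ range (M + 1), ((n : ℝ) + 1) ^ (s - 1)) := by
        rw [ofReal_mul zero_le_two, ofReal_ofNat, ofReal_sum_of_nonneg fun _ _ => by positivity]
    _ ≤ ENNReal.ofReal (2 * 4 ^ s / s * 2 ^ ((r : ℝ) * s)) := by
        refine ofReal_le_ofReal ?_
        calc 2 * ∑ n ∈ range (M + 1), ((n : ℝ) + 1) ^ (s - 1)
            ≤ 2 * ((M + 1 : ℕ) ^ s / s) := by
              gcongr; exact Real.sum_range_add_one_rpow_sub_one_le hs0 hs1 _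
          _ ≤ 2 * ((4 * 2 ^ r) ^ s / s) := by gcongr
          _ = 2 * 4 ^ s / s * 2 ^ ((r : ℝ) * s) := by
              rw [Real.mul_rpow (by norm_num) (by positivity), ← Real.rpow_natCast,
                ← Real.rpow_mul zero_le_two]
              ring
    _ = ENNReal.ofReal (2 * 4 ^ s / s) * 2 ^ ((r : ℝ) * s) := by
        rw [ofReal_mul (by positivity), ← ofReal_rpow_of_pos zero_lt_two, ofReal_ofNat]

lemma rpow_two_rpow_mul_hatAvg_le {p : ℝ} (hp : 1 < p) (a : ℤ → ℂ) (r : ℕ) :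
    ((2 : ℝ≥0∞) ^ ((r : ℝ) * (1 - 1 / p)) * hatAvg a r) ^ p ≤
      ENNReal.ofReal (2 * 4 ^ (1 / p) / (1 / p)) ^ (p - 1) * (2 ^ (-(r : ℝ) * (1 / p)) *
        ∑ j ∈ dyadicBox r, bracket j ^ (p - 2 + 1 / p) * ENNReal.ofReal ‖a j‖ ^ p) := by
  have hp0 : 0 < p := by linarith
  set c := ENNReal.ofReal (2 * 4 ^ (1 / p) / (1 / p))
  set G := ∑ j ∈ dyadicBox r, bracket j ^ (1 / p - 1)
  set F := ∑ j ∈ dyadicBox r, bracket j ^ (p - 2 + 1 / p) * ENNReal.ofReal ‖a j‖ ^ p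
  have hG : G ≤ c * 2 ^ ((r : ℝ) * (1 / p)) :=
    sum_dyadicBox_bracket_rpow_le (by positivity) (by rw [div_le_one hp0]; linarith) r
  have hhat : (2 : ℝ≥0∞) ^ ((r : ℝ) * (1 - 1 / p)) * hatAvg a r ≤
      2 ^ (-(r : ℝ) * (1 / p)) * (G ^ (1 - 1 / p) * F ^ (1 / p)) :=
    calc (2 : ℝ≥0∞) ^ ((r : ℝ) * (1 - 1 / p)) * hatAvg a r
        ≤ 2 ^ ((r : ℝ) * (1 - 1 / p)) *
            (2 ^ (-(r : ℝ)) * ∑ j ∈ dyadicBox r, ENNReal.ofReal ‖a j‖) := by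
          gcongr; exact hatAvg_le a r
      _ = 2 ^ (-(r : ℝ) * (1 / p)) * ∑ j ∈ dyadicBox r, ENNReal.ofReal ‖a j‖ := by
          rw [← mul_assoc, ← two_rpow_add]; ring_nf
      _ ≤ _ := by gcongr; exact sum_le_holder_bracket hp _ _
  calc ((2 : ℝ≥0∞) ^ ((r : ℝ) * (1 - 1 / p)) * hatAvg a r) ^ p
      ≤ (2 ^ (-(r : ℝ) * (1 / p)) * (G ^ (1 - 1 / p) * F ^ (1 / p))) ^ p := by gcongr
    _ = 2 ^ (-(r : ℝ)) * (G ^ (p - 1) * F) := by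
        rw [mul_rpow_of_nonneg _ _ hp0.le, mul_rpow_of_nonneg _ _ hp0.le, ← rpow_mul, ← rpow_mul,
          ← rpow_mul]
        field_simp
        rw [rpow_one]
    _ ≤ 2 ^ (-(r : ℝ)) * ((c * 2 ^ ((r : ℝ) * (1 / p))) ^ (p - 1) * F) := by gcongr
    _ = c ^ (p - 1) * (2 ^ (-(r : ℝ) * (1 / p)) * F) := by
        rw [mul_rpow_of_nonneg _ _ (by linarith), ← rpow_mul,
          show -(r : ℝ) * (1 / p) = -(r : ℝ) + (r : ℝ) * (1 / p) * (p - 1) by field_simp; ring,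
          two_rpow_add]
        ring

lemma mem_dyadicBox_iff_le {r : ℕ} {j : ℤ} : j ∈ dyadicBox r ↔ Nat.clog 2 j.natAbs - 1 ≤ r := by
  rw [mem_dyadicBox, ← Nat.clog_le_iff_le_pow one_lt_two]
  omega

lemma bracket_le_two_rpow (j : ℤ) : bracket j ≤ 2 ^ ((Nat.clog 2 j.natAbs - 1 : ℕ) + 2 : ℝ) := by
  have h : j.natAbs ≤ 2 ^ (Nat.clog 2 j.natAbs - 1 + 1) :=
    mem_dyadicBox.mp (mem_dyadicBox_iff_le.mpr le_rfl)
  have h1 : 1 ≤ 2 ^ (Nat.clog 2 j.natAbs - 1 + 1) := Nat.one_le_two_pow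
  rw [show ((Nat.clog 2 j.natAbs - 1 : ℕ) + 2 : ℝ) = ((Nat.clog 2 j.natAbs - 1 + 2 : ℕ) : ℝ) by
    push_cast; ring, rpow_natCast, bracket]
  exact_mod_cast (by rw [pow_succ]; omega : j.natAbs + 1 ≤ 2 ^ (Nat.clog 2 j.natAbs - 1 + 2))

lemma tsum_ite_mem_dyadicBox_le {s : ℝ} (hs : 0 ≤ s) (j : ℤ) :
    ∑' r : ℕ, (if j ∈ dyadicBox r then (2 : ℝ≥0∞) ^ (-(r : ℝ) * s) else 0) ≤
      4 ^ s * (1 - 2 ^ (-s))⁻¹ * bracket j ^ (-s) := by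
  set r₀ := Nat.clog 2 j.natAbs - 1
  have hpow (x : ℝ) : (2 : ℝ≥0∞) ^ (-x * s) = (2 ^ (-s)) ^ x := by
    rw [← rpow_mul]; ring_nf
  simp only [mem_dyadicBox_iff_le, hpow, rpow_natCast]
  rw [tsum_geometric_tail, mul_right_comm (4 ^ s)]
  gcongr
  calc ((2 : ℝ≥0∞) ^ (-s)) ^ r₀ = 4 ^ s * (2 ^ ((r₀ : ℝ) + 2)) ^ (-s) := by
        rw [← rpow_natCast, ← rpow_mul, ← rpow_mul, show (4 : ℝ≥0∞) = 2 ^ (2 : ℝ) by norm_num,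
          ← rpow_mul, ← two_rpow_add]
        ring_nf
    _ ≤ 4 ^ s * bracket j ^ (-s) := by
        rw [rpow_neg, rpow_neg]
        gcongr
        exact bracket_le_two_rpow j

lemma tsum_two_rpow_mul_sum_dyadicBox_le {s : ℝ} (hs : 0 ≤ s) (u : ℤ → ℝ≥0∞) :
    ∑' r : ℕ, (2 : ℝ≥0∞) ^ (-(r : ℝ) * s) * ∑ j ∈ dyadicBox r, u j ≤
      4 ^ s * (1 - 2 ^ (-s))⁻¹ * ∑' j : ℤ, bracket j ^ (-s) * u j := by
  have hbox (r : ℕ) : (2 : ℝ≥0∞) ^ (-(r : ℝ) * s) * ∑ j ∈ dyadicBox r, u j =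
      ∑' j : ℤ, (if j ∈ dyadicBox r then (2 : ℝ≥0∞) ^ (-(r : ℝ) * s) else 0) * u j := by
    rw [tsum_eq_sum fun j hj => by rw [if_neg hj, zero_mul], mul_sum]
    exact sum_congr rfl fun j hj => by rw [if_pos hj]
  simp only [hbox]
  rw [ENNReal.tsum_comm, ← ENNReal.tsum_mul_left]
  refine ENNReal.tsum_le_tsum fun j => ?_
  rw [ENNReal.tsum_mul_right, ← mul_assoc]
  gcongr
  exact tsum_ite_mem_dyadicBox_le hs j

lemma rpow_two_rpow_mul_min_le {p : ℝ} (hp : 1 < p) (k r : ℕ) :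
    ((2 : ℝ≥0∞) ^ (((k : ℝ) - r) * (1 - 1 / p)) * min 1 (2 ^ ((r : ℝ) - k))) ^ p ≤
      ((2 : ℝ≥0∞) ^ (-min (p - 1) 1)) ^ ((k : ℤ) - r).natAbs := by
  have hp0 : 0 ≤ p := by linarith
  set t : ℝ := k - r with ht
  have hc1 := min_le_left (p - 1) 1
  have hc2 := min_le_right (p - 1) 1
  rw [← rpow_natCast, ← rpow_mul, Nat.cast_natAbs, Int.cast_abs]
  push_cast
  rw [← ht]
  rcases le_total 0 t with ht0 | ht0
  · refine rpow_le_two_rpow_of_le hp0 (e := t * (1 - 1 / p) + -t) ?_ ?_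
    · rw [two_rpow_add, neg_sub]
      gcongr
      exact min_le_right _ _
    · rw [abs_of_nonneg ht0]
      field_simp
      nlinarith
  · refine rpow_le_two_rpow_of_le hp0 (e := t * (1 - 1 / p)) ?_ ?_
    · exact mul_le_of_le_one_right' (min_le_left _ _)
    · rw [abs_of_nonpos ht0]
      field_simp
      nlinarith

lemma tsum_rpow_two_rpow_mul_iSup_min_le {p : ℝ} (hp : 1 < p) (h : ℕ → ℝ≥0∞) :
    ∑' k : ℕ, ((2 : ℝ≥0∞) ^ ((k : ℝ) * (1 - 1 / p)) *
        ⨆ r : ℕ, min 1 ((2 : ℝ≥0∞) ^ ((r : ℝ) - (k : ℝ))) * h r) ^ p ≤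
      (1 + 2 ^ (-min (p - 1) 1)) * (1 - 2 ^ (-min (p - 1) 1))⁻¹ *
        ∑' r : ℕ, ((2 : ℝ≥0∞) ^ ((r : ℝ) * (1 - 1 / p)) * h r) ^ p := by
  set K : ℕ → ℕ → ℝ≥0∞ := fun k r =>
    2 ^ (((k : ℝ) - r) * (1 - 1 / p)) * min 1 (2 ^ ((r : ℝ) - k))
  have hsplit (k : ℕ) : (2 : ℝ≥0∞) ^ ((k : ℝ) * (1 - 1 / p)) *
      ⨆ r : ℕ, min 1 ((2 : ℝ≥0∞) ^ ((r : ℝ) - (k : ℝ))) * h r =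
      ⨆ r : ℕ, K k r * (2 ^ ((r : ℝ) * (1 - 1 / p)) * h r) := by
    rw [ENNReal.mul_iSup]
    refine iSup_congr fun r => ?_
    rw [show (k : ℝ) * (1 - 1 / p) = ((k : ℝ) - r) * (1 - 1 / p) + r * (1 - 1 / p) by ring,
      two_rpow_add]
    ring
  have hcol (r : ℕ) :
      ∑' k, K k r ^ p ≤ (1 + 2 ^ (-min (p - 1) 1)) * (1 - 2 ^ (-min (p - 1) 1))⁻¹ :=
    calc ∑' k, K k r ^ p ≤ ∑' k : ℕ, ((2 : ℝ≥0∞) ^ (-min (p - 1) 1)) ^ ((k : ℤ) - r).natAbs :=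
          ENNReal.tsum_le_tsum fun k => rpow_two_rpow_mul_min_le hp k r
      _ ≤ ∑' n : ℤ, ((2 : ℝ≥0∞) ^ (-min (p - 1) 1)) ^ n.natAbs :=
          tsum_comp_le_tsum_of_injective (fun k l hkl => by simpa using hkl) _
      _ = _ := tsum_pow_natAbs _
  simp only [hsplit]
  exact (tsum_rpow_iSup_mul_le (by linarith) K _).trans (by gcongr; exact iSup_le hcol)

lemma exists_Ap_rpow_le_mul_Jp_rpow {p : ℝ} (hp : 1 < p) :
    ∃ C : ℝ≥0∞, C ≠ ⊤ ∧ ∀ a : ℤ → ℂ,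
      ∑' k : ℕ, ((2 : ℝ≥0∞) ^ ((k : ℝ) * (1 - 1 / p)) *
          ⨆ r : ℕ, min 1 ((2 : ℝ≥0∞) ^ ((r : ℝ) - (k : ℝ))) * hatAvg a r) ^ p ≤
        C * ∑' k : ℤ, ((k.natAbs : ℝ≥0∞) + 1) ^ (p - 2) * (ENNReal.ofReal ‖a k‖) ^ p := by
  have hp0 : 0 < p := by linarith
  set q : ℝ≥0∞ := 2 ^ (-min (p - 1) 1)
  set c := ENNReal.ofReal (2 * 4 ^ (1 / p) / (1 / p))
  refine ⟨(1 + q) * (1 - q)⁻¹ * (c ^ (p - 1) * (4 ^ (1 / p) * (1 - 2 ^ (-(1 / p)))⁻¹)),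
    ?_, fun a => ?_⟩
  · have := one_sub_two_rpow_neg_inv_ne_top (lt_min (by linarith : 0 < p - 1) one_pos)
    have := one_sub_two_rpow_neg_inv_ne_top (one_div_pos.mpr hp0)
    have : c ^ (p - 1) ≠ ⊤ := rpow_ne_top_of_nonneg (by linarith) ofReal_ne_top
    finiteness
  calc ∑' k : ℕ, ((2 : ℝ≥0∞) ^ ((k : ℝ) * (1 - 1 / p)) *
          ⨆ r : ℕ, min 1 ((2 : ℝ≥0∞) ^ ((r : ℝ) - (k : ℝ))) * hatAvg a r) ^ p
      ≤ (1 + q) * (1 - q)⁻¹ *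
          ∑' r : ℕ, ((2 : ℝ≥0∞) ^ ((r : ℝ) * (1 - 1 / p)) * hatAvg a r) ^ p :=
        tsum_rpow_two_rpow_mul_iSup_min_le hp _
    _ ≤ (1 + q) * (1 - q)⁻¹ * (c ^ (p - 1) * ∑' r : ℕ, 2 ^ (-(r : ℝ) * (1 / p)) *
          ∑ j ∈ dyadicBox r, bracket j ^ (p - 2 + 1 / p) * ENNReal.ofReal ‖a j‖ ^ p) := by
        rw [← ENNReal.tsum_mul_left (a := c ^ (p - 1))]
        exact mul_le_mul_right (ENNReal.tsum_le_tsum (rpow_two_rpow_mul_hatAvg_le hp a)) _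
    _ ≤ (1 + q) * (1 - q)⁻¹ * (c ^ (p - 1) * (4 ^ (1 / p) * (1 - 2 ^ (-(1 / p)))⁻¹ *
          ∑' j : ℤ, bracket j ^ (-(1 / p)) *
            (bracket j ^ (p - 2 + 1 / p) * ENNReal.ofReal ‖a j‖ ^ p))) := by
        gcongr
        exact tsum_two_rpow_mul_sum_dyadicBox_le (by positivity) _
    _ = _ := by
        have hexp : -(1 / p) + (p - 2 + 1 / p) = p - 2 := by ring
        simp only [← mul_assoc, ← bracket_rpow_add, hexp]
        rfl

/-- For `1 < p < ∞` there is `C_p > 0` such that for every complex sequence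
`a` with `J_p = (∑_{k∈ℤ}(|k|+1)^{p-2}|a_k|^p)^{1/p} < ∞`,
`A_p(a) = (∑_{k≥0} (2^{k/p'} sup_{r≥0} min(1,2^{r-k}) â_{2^r})^p)^{1/p} ≤ C_p J_p`,
where `1/p' = 1 - 1/p`. -/
theorem Ap_le_Jp (p : ℝ) (hp1 : 1 < p) :
    ∃ C : ℝ, 0 < C ∧ ∀ a : ℤ → ℂ,
      (∑' k : ℤ, ((k.natAbs : ℝ≥0∞) + 1) ^ (p - 2) *
          (ENNReal.ofReal ‖a k‖) ^ p) ^ (1 / p) < ⊤ →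
      (∑' k : ℕ, ((2 : ℝ≥0∞) ^ ((k : ℝ) * (1 - 1 / p)) *
          ⨆ r : ℕ, min 1 ((2 : ℝ≥0∞) ^ ((r : ℝ) - (k : ℝ))) * hatAvg a r) ^ p) ^ (1 / p) ≤
        ENNReal.ofReal C *
          (∑' k : ℤ, ((k.natAbs : ℝ≥0∞) + 1) ^ (p - 2) *
            (ENNReal.ofReal ‖a k‖) ^ p) ^ (1 / p) := by
  obtain ⟨C, hC, hAJ⟩ := exists_Ap_rpow_le_mul_Jp_rpow hp1
  have hp0 : 0 ≤ 1 / p := by positivity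
  refine ⟨(C ^ (1 / p)).toReal + 1, by positivity, fun a _ => ?_⟩
  grw [hAJ a, mul_rpow_of_nonneg _ _ hp0]
  gcongr
  exact (ofReal_toReal (rpow_ne_top_of_nonneg hp0 hC)).ge.trans (ofReal_le_ofReal (by linarith))
end
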